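/- Let i ≥ 2, n ≥ 1, and let B_1, …, B_i be n × n matrices with entries in k. The Q_i-linear map Q_i^n → Q_i^n given by the matrix x·I_n + Σ_{j=1}^i B_j·y_j is injective. (Consequently its cokernel has projective dimension 1 over Q_i.) -/
import Mathlib


set_option synthInstance.maxHeartbeats 1000000
set_option maxHeartbeats 1000000

open MvPolynomial

noncomputable section
/-- The defining ideal `((Y₁,…,Y_i)²)` of `Q_i` in `k[X,Y₁,…,Y_i]`;
the variable `X 0` plays the role of `X` and `X j.succ` the role of `Y_j`. -/
abbrev QIdeal (k : Type) [Field k] (i : ℕ) : Ideal (MvPolynomial (Fin (i + 1)) k) :=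
  Ideal.span {p | ∃ a b : Fin i, p = X a.succ * X b.succ}

/-- `Q_i = k[X,Y₁,…,Y_i]/((Y₁,…,Y_i)²)`. -/
abbrev Qring (k : Type) [Field k] (i : ℕ) := MvPolynomial (Fin (i + 1)) k ⧸ QIdeal k i

/-- `x`, the residue class of `X` in `Q_i`. -/
abbrev xQ (k : Type) [Field k] (i : ℕ) : Qring k i := Ideal.Quotient.mk _ (X 0)

/-- `y_j`, the residue class of `Y_j` in `Q_i`. -/
abbrev yQ (k : Type) [Field k] (i : ℕ) (j : Fin i) : Qring k i :=
  Ideal.Quotient.mk _ (X j.succ)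

section Aux
variable (k : Type) [Field k] (i : ℕ)

abbrev Tring := TrivSqZeroExt (Polynomial k) (Fin i → Polynomial k)

example : CommRing (Tring k i) := inferInstance
example : Algebra k (Tring k i) := inferInstance

def Phi : MvPolynomial (Fin (i + 1)) k →ₐ[k] Tring k i :=
  aeval (Fin.cases (TrivSqZeroExt.inl Polynomial.X)
    (fun j => TrivSqZeroExt.inr (Pi.single j 1)))

lemma Phi_ker : ∀ p ∈ QIdeal k i, Phi k i p = 0 := by
  intro p hp
  have : QIdeal k i ≤ RingHom.ker (Phi k i).toRingHom := by
    rw [Ideal.span_le]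
    rintro q ⟨a, b, rfl⟩
    simp [RingHom.mem_ker, Phi, TrivSqZeroExt.inr_mul_inr]
  exact this hp

def Phibar : Qring k i →+* Tring k i :=
  Ideal.Quotient.lift (QIdeal k i) (Phi k i).toRingHom (Phi_ker k i)

instance : Algebra (Polynomial k) (Qring k i) :=
  (Polynomial.aeval (xQ k i) : Polynomial k →ₐ[k] Qring k i).toRingHom.toAlgebra

lemma yy (a b : Fin i) : yQ k i a * yQ k i b = 0 := by
  rw [yQ, yQ, ← map_mul, Ideal.Quotient.eq_zero_iff_mem]
  exact Ideal.subset_span ⟨a, b, rfl⟩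

def gmap : (Fin i → Polynomial k) →ₗ[Polynomial k] Qring k i where
  toFun m := ∑ j, Polynomial.aeval (xQ k i) (m j) * yQ k i j
  map_add' a b := by simp [add_mul, Finset.sum_add_distrib]
  map_smul' r m := by
    simp only [Pi.smul_apply, smul_eq_mul, map_mul, RingHom.id_apply, Algebra.smul_def,
      RingHom.algebraMap_toAlgebra, AlgHom.toRingHom_eq_coe, RingHom.coe_coe, Finset.mul_sum,
      mul_assoc]

def sigma : Tring k i →ₐ[Polynomial k] Qring k i :=
  TrivSqZeroExt.lift (Algebra.ofId _ _) (gmap k i)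
    (fun a b => by
      simp only [gmap, LinearMap.coe_mk, AddHom.coe_mk, Finset.sum_mul_sum]
      refine Finset.sum_eq_zero fun c _ => Finset.sum_eq_zero fun d _ => ?_
      rw [mul_mul_mul_comm, yy, mul_zero])
    (fun r m => by
      rw [map_smul, Algebra.smul_def, Algebra.ofId_apply])
    (fun r m => by
      rw [op_smul_eq_smul, map_smul, Algebra.smul_def, Algebra.ofId_apply, mul_comm])

lemma sigma_Phi (p : MvPolynomial (Fin (i + 1)) k) :
    sigma k i (Phi k i p) = Ideal.Quotient.mk (QIdeal k i) p := by
  have : ((sigma k i).toRingHom.comp (Phi k i).toRingHom) =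
      Ideal.Quotient.mk (QIdeal k i) := by
    apply MvPolynomial.ringHom_ext
    · intro a
      show sigma k i (Phi k i (C a)) = _
      rw [show ((C a : MvPolynomial (Fin (i+1)) k)) = algebraMap k _ a from rfl,
        AlgHom.commutes]
      rw [show (algebraMap k (Tring k i) a) = TrivSqZeroExt.inl (Polynomial.C a) from rfl]
      rw [sigma, TrivSqZeroExt.lift_apply_inl, Algebra.ofId_apply,
        RingHom.algebraMap_toAlgebra]
      simp
      rfl
    · intro j
      show sigma k i (Phi k i (X j)) = _
      induction j using Fin.cases with
      | zero =>
        rw [Phi, aeval_X, Fin.cases_zero, sigma, TrivSqZeroExt.lift_apply_inl,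
          Algebra.ofId_apply, RingHom.algebraMap_toAlgebra]
        simp
      | succ a =>
        rw [Phi, aeval_X, Fin.cases_succ, sigma, TrivSqZeroExt.lift_apply_inr]
        simp only [gmap, LinearMap.coe_mk, AddHom.coe_mk]
        rw [Finset.sum_eq_single a]
        · simp
        · intro b _ hb
          simp [Pi.single_apply, if_neg hb]
        · simp
  exact RingHom.congr_fun this p

lemma Phibar_inj : Function.Injective (Phibar k i) := by
  intro a b hab
  obtain ⟨p, rfl⟩ := Ideal.Quotient.mk_surjective a
  obtain ⟨q, rfl⟩ := Ideal.Quotient.mk_surjective b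
  have : sigma k i (Phibar k i (Ideal.Quotient.mk _ p)) =
      sigma k i (Phibar k i (Ideal.Quotient.mk _ q)) := by rw [hab]
  rwa [Phibar, Ideal.Quotient.lift_mk, Ideal.Quotient.lift_mk,
    AlgHom.toRingHom_eq_coe, RingHom.coe_coe, sigma_Phi, sigma_Phi] at this

end Aux

/-- The `Q_i`-linear map `Q_iⁿ → Q_iⁿ` given by the matrix
`x·I + Σ B_j·y_j` is injective. -/
theorem stmt11 (k : Type) [Field k] [CharZero k] (i n : ℕ) (hi : 2 ≤ i) (hn : 1 ≤ n)
    (B : Fin i → Matrix (Fin n) (Fin n) k) :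
    Function.Injective (Matrix.mulVecLin
      (xQ k i • (1 : Matrix (Fin n) (Fin n) (Qring k i)) +
        ∑ j, yQ k i j • (B j).map (algebraMap k (Qring k i)))) := by
  set A := xQ k i • (1 : Matrix (Fin n) (Fin n) (Qring k i)) +
      ∑ j, yQ k i j • (B j).map (algebraMap k (Qring k i)) with hA
  rw [injective_iff_map_eq_zero]
  intro v hv
  have hx : Phibar k i (xQ k i) = TrivSqZeroExt.inl Polynomial.X := by
    simp [Phibar, Phi]
  have hy : ∀ j : Fin i, Phibar k i (yQ k i j) =
      TrivSqZeroExt.inr (Pi.single j (1 : Polynomial k)) := by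
    intro j; simp [Phibar, Phi]
  have halg : ∀ b : k, Phibar k i (algebraMap k (Qring k i) b) =
      TrivSqZeroExt.inl (Polynomial.C b) := by
    intro b
    have : algebraMap k (Qring k i) b = Ideal.Quotient.mk (QIdeal k i) (C b) := rfl
    rw [this]
    simp [Phibar, Phi]
    rfl
  have hfstA : ∀ c d, (Phibar k i (A c d)).fst = if c = d then Polynomial.X else 0 := by
    intro c d
    have h1 : A c d = (if c = d then xQ k i else 0) +
        ∑ j, yQ k i j * algebraMap k (Qring k i) (B j c d) := by
      simp [hA, Matrix.add_apply, Matrix.smul_apply, Matrix.sum_apply, Matrix.one_apply,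
        Matrix.map_apply, smul_eq_mul, mul_ite, mul_one, mul_zero]
    rw [h1, map_add, map_sum]
    simp only [map_mul, hy, halg, apply_ite (Phibar k i), map_zero, hx,
      TrivSqZeroExt.fst_add, TrivSqZeroExt.fst_sum, TrivSqZeroExt.fst_mul,
      TrivSqZeroExt.fst_inr, TrivSqZeroExt.fst_inl, zero_mul, Finset.sum_const_zero,
      apply_ite TrivSqZeroExt.fst, TrivSqZeroExt.fst_zero, add_zero]
  have heq : ∀ c, ∑ d, Phibar k i (A c d) * Phibar k i (v d) = 0 := by
    intro c
    have h0 : A.mulVec v c = 0 := by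
      have := congrFun hv c
      rwa [Matrix.mulVecLin_apply] at this
    have h1 : A.mulVec v c = ∑ d, A c d * v d := rfl
    simp only [← map_mul, ← map_sum, ← h1, h0, map_zero]
  have hfstw : ∀ c, (Phibar k i (v c)).fst = 0 := by
    intro c
    have h := congrArg TrivSqZeroExt.fst (heq c)
    simp only [TrivSqZeroExt.fst_sum, TrivSqZeroExt.fst_mul, hfstA, TrivSqZeroExt.fst_zero,
      ite_mul, zero_mul, Finset.sum_ite_eq, Finset.mem_univ, if_true] at h
    rcases mul_eq_zero.mp h with h' | h'
    · exact absurd h' Polynomial.X_ne_zero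
    · exact h'
  have hsndw : ∀ c, (Phibar k i (v c)).snd = 0 := by
    intro c
    have h := congrArg TrivSqZeroExt.snd (heq c)
    simp only [TrivSqZeroExt.snd_sum, TrivSqZeroExt.snd_mul, hfstA, hfstw,
      MulOpposite.op_zero, zero_smul, add_zero, smul_zero, TrivSqZeroExt.snd_zero,
      ite_smul, Finset.sum_ite_eq, Finset.mem_univ, if_true] at h
    have := smul_eq_zero.mp h
    rcases this with h' | h'
    · exact absurd h' Polynomial.X_ne_zero
    · exact h'
  funext c
  apply Phibar_inj k i
  rw [Pi.zero_apply, map_zero]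
  exact TrivSqZeroExt.ext (hfstw c) (hsndw c)
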